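/- For every positive integer N and every character χ : Γ → ℂ^×, the space Θ_N(χ) is an N-dimensional complex vector space. -/

import Mathlib

open Complex

/-- The lattice `Γ = ℤ + τℤ` as an additive subgroup of `ℂ`. -/
noncomputable def latticeGamma (τ : ℂ) : AddSubgroup ℂ := AddSubgroup.closure {1, τ}

theorem one_mem_latticeGamma (τ : ℂ) : (1 : ℂ) ∈ latticeGamma τ :=
  AddSubgroup.subset_closure (Set.mem_insert _ _)

theorem tau_mem_latticeGamma (τ : ℂ) : τ ∈ latticeGamma τ :=
  AddSubgroup.subset_closure (Set.mem_insert_of_mem _ rfl)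

/-- The space `Θ_N(χ)` of elliptic polynomials: entire functions `φ` with
`φ(y+1) = c₁ φ(y)` and `φ(y+τ) = c_τ e^{-2πiNy - πiNτ} φ(y)`, where `c₁ = χ(1)` and
`c_τ = χ(τ)`.  It is a complex subspace of the space of functions `ℂ → ℂ`. -/
noncomputable def ThetaSpace (τ : ℂ) (N : ℕ) (c1 cτ : ℂ) : Submodule ℂ (ℂ → ℂ) where
  carrier := {φ | Differentiable ℂ φ ∧ (∀ y : ℂ, φ (y + 1) = c1 * φ y) ∧
    (∀ y : ℂ, φ (y + τ) = cτ *
      Complex.exp (-2 * Real.pi * Complex.I * (N : ℂ) * y - Real.pi * Complex.I * (N : ℂ) * τ) *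
      φ y)}
  add_mem' := by
    rintro f g ⟨hf, hf1, hfτ⟩ ⟨hg, hg1, hgτ⟩
    refine ⟨hf.add hg, fun y => ?_, fun y => ?_⟩
    · simp only [Pi.add_apply, hf1 y, hg1 y]; ring
    · simp only [Pi.add_apply, hfτ y, hgτ y]; ring
  zero_mem' := by
    refine ⟨differentiable_const 0, fun y => ?_, fun y => ?_⟩ <;> simp
  smul_mem' := by
    rintro c f ⟨hf, hf1, hfτ⟩
    refine ⟨hf.const_smul c, fun y => ?_, fun y => ?_⟩
    · simp only [Pi.smul_apply, smul_eq_mul, hf1 y]; ring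
    · simp only [Pi.smul_apply, smul_eq_mul, hfτ y]; ring

/-!
Multiplying by `exp (a y)` after translating by `z` turns the multipliers `(c₁, c_τ)` into
`(e^a c₁, e^{aτ - 2πiNz} c_τ)`, so we may assume `c₁ = c_τ = 1`. Then `φ` is `1`-periodic and
moving the contour of `cₙ = ∫₀¹ e^{-2πint} φ(t) dt` up by `τ` gives
`cₙ = e^{-πiNτ - 2πinτ} c_{n+N}`; so `c₀, …, c_{N-1}` determine all Fourier coefficients, hence
`φ` on `ℝ`, hence `φ` by the identity theorem. The theta functions
`e^{2πijy} θ(Ny + jτ, Nτ)`, `0 ≤ j < N`, lie in `Θ_N` and have `cₙ = δₙⱼ` for `0 ≤ n < N`.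
-/

open Complex MeasureTheory Filter Topology
open scoped Real

theorem integral_exp_two_pi_I_int_mul (k : ℤ) :
    ∫ t in (0:ℝ)..1, exp (2 * π * I * k * t) = if k = 0 then 1 else 0 := by
  split_ifs with hk
  · simp [hk]
  have hc : 2 * π * I * k ≠ 0 := by simp [Real.pi_ne_zero, hk]
  rw [integral_exp_mul_complex hc]
  simp [show exp (2 * π * I * k) = 1 by
    rw [show 2 * π * I * k = k * (2 * π * I) by ring, exp_int_mul_two_pi_mul_I]]

theorem periodic_exp_two_pi_I_int_mul (n : ℤ) :
    Function.Periodic (fun y : ℂ => exp (2 * π * I * n * y)) 1 := fun y => by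
  simp only [mul_add, mul_one, exp_add,
    show exp (2 * π * I * n) = 1 by rw [mul_comm, exp_int_mul_two_pi_mul_I]]

/-- Cauchy's theorem on the rectangle with vertices `0, 1, ib, 1 + ib`: by periodicity the two
vertical sides cancel. -/
theorem integral_comp_add_mul_I_of_periodic {g : ℂ → ℂ} (hg : Differentiable ℂ g)
    (hper : Function.Periodic g 1) (b : ℝ) :
    ∫ t in (0:ℝ)..1, g (t + b * I) = ∫ t in (0:ℝ)..1, g t := by
  have rect := integral_boundary_rect_eq_zero_of_differentiableOn g 0 (1 + b * I)
    hg.differentiableOn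
  have hsides : ∫ y in (0:ℝ)..b, g (1 + y * I) = ∫ y in (0:ℝ)..b, g (0 + y * I) := by
    refine intervalIntegral.integral_congr fun y _ => ?_
    simp only [zero_add, add_comm (1 : ℂ), hper (y * I)]
  simp only [zero_re, zero_im, add_re, one_re, mul_re, I_re, mul_zero, ofReal_re, I_im, mul_one,
    sub_self, add_zero, add_im, one_im, mul_im, ofReal_im, zero_add, ofReal_zero, ofReal_one,
    hsides, zero_mul] at rect
  linear_combination -rect

theorem integral_comp_add_of_periodic {g : ℂ → ℂ} (hg : Differentiable ℂ g)
    (hper : Function.Periodic g 1) (s : ℂ) :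
    ∫ t in (0:ℝ)..1, g (t + s) = ∫ t in (0:ℝ)..1, g t := by
  have hper' : Function.Periodic (fun u : ℝ => g (u + s.im * I)) 1 := fun u => by
    simpa [add_right_comm] using hper (u + s.im * I)
  calc ∫ t in (0:ℝ)..1, g (t + s)
      = ∫ t in (0:ℝ)..1, g ((t + s.re : ℝ) + s.im * I) := by
        simp_rw [ofReal_add, add_assoc, re_add_im]
    _ = ∫ t in s.re..s.re + 1, g (t + s.im * I) := by
        rw [intervalIntegral.integral_comp_add_right (fun u : ℝ => g (u + s.im * I)), zero_add,
          add_comm]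
    _ = ∫ t in (0:ℝ)..1, g t := by
        rw [hper'.intervalIntegral_add_eq s.re 0, zero_add,
          integral_comp_add_mul_I_of_periodic hg hper]

theorem eq_zero_of_periodic_of_integral_exp_mul_eq_zero {f : ℝ → ℂ} (hf : Continuous f)
    (hper : Function.Periodic f 1)
    (h : ∀ n : ℤ, ∫ t in (0:ℝ)..1, exp (-(2 * π * I * n * t)) * f t = 0) : f = 0 := by
  have : Fact ((0:ℝ) < 1) := ⟨one_pos⟩
  let F : C(AddCircle (1:ℝ), ℂ) := ⟨hper.lift, continuous_coinduced_dom.mpr hf⟩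
  have hF_coe (t : ℝ) : F t = f t := hper.lift_coe t
  have hF : fourierCoeff F = 0 := by
    ext n
    rw [fourierCoeff_eq_intervalIntegral _ n 0, zero_add, Pi.zero_apply, ← h n, div_one,
      one_smul]
    refine intervalIntegral.integral_congr fun t _ => ?_
    rw [smul_eq_mul, fourier_coe_apply, hF_coe]
    push_cast
    ring_nf
  have hsum : Summable (fourierCoeff F) := hF ▸ summable_zero
  ext t
  rw [← hF_coe, Pi.zero_apply]
  refine (has_pointwise_sum_fourier_series_of_summable hsum (t : AddCircle (1:ℝ))).unique ?_
  simp only [hF, Pi.zero_apply, zero_smul]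
  exact hasSum_zero

theorem Differentiable.eq_zero_of_forall_ofReal_eq_zero {φ : ℂ → ℂ} (hφ : Differentiable ℂ φ)
    (h : ∀ t : ℝ, φ t = 0) : φ = 0 := by
  have hreal : Tendsto ((↑) : ℝ → ℂ) (𝓝[≠] 0) (𝓝[≠] 0) :=
    tendsto_nhdsWithin_of_tendsto_nhds_of_eventually_within _
      ((continuous_ofReal.tendsto' 0 0 ofReal_zero).mono_left nhdsWithin_le_nhds)
      (eventually_nhdsWithin_of_forall fun t ht => by simpa using ht)
  have hφ' : AnalyticOnNhd ℂ φ Set.univ := analyticOnNhd_univ_iff_differentiable.mpr hφ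
  funext z
  exact hφ'.eqOn_zero_of_preconnected_of_frequently_eq_zero isPreconnected_univ (Set.mem_univ 0)
    (hreal.frequently (.of_forall h)) (Set.mem_univ z)

noncomputable def fourierCoeffUnit (φ : ℂ → ℂ) (n : ℤ) : ℂ :=
  ∫ t in (0:ℝ)..1, exp (-(2 * π * I * n * t)) * φ t

theorem fourierCoeffUnit_add {φ ψ : ℂ → ℂ} (hφ : Continuous φ) (hψ : Continuous ψ) (n : ℤ) :
    fourierCoeffUnit (φ + ψ) n = fourierCoeffUnit φ n + fourierCoeffUnit ψ n := by
  simp only [fourierCoeffUnit, Pi.add_apply, mul_add]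
  exact intervalIntegral.integral_add ((by fun_prop : Continuous _).intervalIntegrable _ _)
    ((by fun_prop : Continuous _).intervalIntegrable _ _)

theorem fourierCoeffUnit_smul (c : ℂ) (φ : ℂ → ℂ) (n : ℤ) :
    fourierCoeffUnit (c • φ) n = c * fourierCoeffUnit φ n := by
  simp only [fourierCoeffUnit, Pi.smul_apply, smul_eq_mul, mul_left_comm _ c,
    intervalIntegral.integral_const_mul]

theorem Differentiable.eq_zero_of_fourierCoeffUnit_eq_zero {φ : ℂ → ℂ} (hφ : Differentiable ℂ φ)
    (hper : Function.Periodic φ 1) (h : ∀ n, fourierCoeffUnit φ n = 0) : φ = 0 :=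
  hφ.eq_zero_of_forall_ofReal_eq_zero <| congrFun <|
    eq_zero_of_periodic_of_integral_exp_mul_eq_zero (hφ.continuous.comp continuous_ofReal)
      (fun t => by simpa using hper t) h

section Normalized

variable {τ : ℂ} {N : ℕ} {φ : ℂ → ℂ}

/-- Move the contour of integration from `[0, 1]` to `[τ, 1 + τ]`. -/
theorem fourierCoeffUnit_eq_mul_fourierCoeffUnit_add (hφ : φ ∈ ThetaSpace τ N 1 1) (n : ℤ) :
    fourierCoeffUnit φ n =
      exp (-(π * I * N * τ) - 2 * π * I * n * τ) * fourierCoeffUnit φ (n + N) := by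
  obtain ⟨hd, h1, hτ⟩ := hφ
  have hper : Function.Periodic (fun y => exp (2 * π * I * (-n : ℤ) * y) * φ y) 1 := fun y => by
    simp only [periodic_exp_two_pi_I_int_mul (-n) y, h1 y, one_mul]
  have hdiff : Differentiable ℂ (fun y => exp (2 * π * I * (-n : ℤ) * y) * φ y) := by fun_prop
  rw [fourierCoeffUnit, fourierCoeffUnit, ← intervalIntegral.integral_const_mul]
  simp only [Int.cast_neg, mul_neg, neg_mul] at hper hdiff
  rw [← integral_comp_add_of_periodic hdiff hper τ]
  refine intervalIntegral.integral_congr fun t _ => ?_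
  simp only [hτ, one_mul]
  rw [← mul_assoc, ← mul_assoc, ← exp_add, ← exp_add]
  push_cast
  ring_nf

theorem fourierCoeffUnit_eq_zero_of_forall_lt (hφ : φ ∈ ThetaSpace τ N 1 1) (hN : 0 < N)
    (h : ∀ j : ℕ, j < N → fourierCoeffUnit φ j = 0) (n : ℤ) : fourierCoeffUnit φ n = 0 := by
  -- the factor relating `cₙ` and `c_{n+N}` is a nonzero exponential
  have hper : Function.Periodic (fun n : ℤ => fourierCoeffUnit φ n = 0) N := fun n => by
    simp [fourierCoeffUnit_eq_mul_fourierCoeffUnit_add hφ n]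
  have hN' : (0 : ℤ) < N := by exact_mod_cast hN
  have hmod := hper.int_mul (n / N) (n % N)
  rw [Int.cast_id, Int.emod_add_ediv_mul] at hmod
  rw [hmod, ← Int.toNat_of_nonneg (Int.emod_nonneg n hN'.ne')]
  exact h _ (by have := Int.emod_lt_of_pos n hN'; omega)

theorem eq_zero_of_mem_thetaSpace_of_forall_lt (hφ : φ ∈ ThetaSpace τ N 1 1) (hN : 0 < N)
    (h : ∀ j : ℕ, j < N → fourierCoeffUnit φ j = 0) : φ = 0 :=
  hφ.1.eq_zero_of_fourierCoeffUnit_eq_zero (fun y => by simpa using hφ.2.1 y)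
    (fourierCoeffUnit_eq_zero_of_forall_lt hφ hN h)

variable (τ N) in
noncomputable def thetaBasis (j : ℕ) : ℂ → ℂ := fun y =>
  exp (2 * π * I * j * y) * jacobiTheta₂ (N * y + j * τ) (N * τ)

theorem thetaBasis_mem_thetaSpace (hτ : 0 < τ.im) (hN : 0 < N) (j : ℕ) :
    thetaBasis τ N j ∈ ThetaSpace τ N 1 1 := by
  have hNτ : 0 < (N * τ).im := by simpa using mul_pos (Nat.cast_pos.mpr hN) hτ
  have hθ : Function.Periodic (jacobiTheta₂ · (N * τ)) 1 := fun z => jacobiTheta₂_add_left z _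
  refine ⟨?_, fun y => ?_, fun y => ?_⟩
  · exact (by fun_prop : Differentiable ℂ fun y : ℂ => exp (2 * π * I * j * y)).mul
      fun y => (differentiableAt_jacobiTheta₂_fst _ hNτ).comp y (by fun_prop)
  · simpa [thetaBasis, mul_add, add_right_comm _ (N : ℂ)] using
      congr_arg₂ (· * ·) (periodic_exp_two_pi_I_int_mul j y) (hθ.nat_mul N (N * y + j * τ))
  · simp only [thetaBasis, one_mul]
    rw [show N * (y + τ) + j * τ = (N * y + j * τ) + N * τ by ring, jacobiTheta₂_add_left',
      ← mul_assoc, ← mul_assoc, ← exp_add, ← exp_add]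
    ring_nf

theorem integral_exp_mul_jacobiTheta₂_term (j n : ℕ) (m : ℤ) :
    ∫ t in (0:ℝ)..1, exp (-(2 * π * I * n * t)) *
        (exp (2 * π * I * j * t) * jacobiTheta₂_term m (N * t + j * τ) (N * τ)) =
      exp (2 * π * I * m * j * τ + π * I * m ^ 2 * (N * τ)) *
        if (j : ℤ) - n + m * N = 0 then 1 else 0 := by
  rw [← integral_exp_two_pi_I_int_mul, ← intervalIntegral.integral_const_mul]
  refine intervalIntegral.integral_congr fun t _ => ?_
  simp only [jacobiTheta₂_term, ← exp_add]
  push_cast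
  ring_nf

theorem int_sub_add_mul_eq_zero_iff {j n : ℕ} (hj : j < N) (hn : n < N) (m : ℤ) :
    (j : ℤ) - n + m * N = 0 ↔ m = 0 ∧ n = j := by
  refine ⟨fun h => ?_, fun ⟨hm, hnj⟩ => by simp [hm, hnj]⟩
  have hjn : (j : ℤ) - n = 0 :=
    Int.eq_zero_of_abs_lt_dvd (m := N) ⟨-m, by linear_combination h⟩ (by rw [abs_lt]; omega)
  have hN : (N : ℤ) ≠ 0 := by omega
  exact ⟨(mul_eq_zero.mp (by linear_combination h - hjn)).resolve_right hN, by omega⟩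

theorem fourierCoeffUnit_thetaBasis (hτ : 0 < τ.im) (hN : 0 < N) {j n : ℕ} (hj : j < N)
    (hn : n < N) : fourierCoeffUnit (thetaBasis τ N j) n = if n = j then 1 else 0 := by
  have hT : 0 < N * τ.im := mul_pos (Nat.cast_pos.mpr hN) hτ
  have hNτ : 0 < (N * τ).im := by simpa using hT
  let F : ℤ → ℝ → ℂ := fun m t => exp (-(2 * π * I * n * t)) *
    (exp (2 * π * I * j * t) * jacobiTheta₂_term m (N * t + j * τ) (N * τ))
  let bound : ℤ → ℝ := fun m => Real.exp (-π * (N * τ.im * m ^ 2 - 2 * |(j * τ).im| * |m|))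
  have hF_le (m : ℤ) (t : ℝ) : ‖F m t‖ ≤ bound m := by
    have hnorm : ‖F m t‖ = ‖jacobiTheta₂_term m (N * t + j * τ) (N * τ)‖ := by
      simp [F, Complex.norm_exp]
    rw [hnorm]
    exact norm_jacobiTheta₂_term_le hT (by simp) (by simp) m
  have hF_cont (m : ℤ) : Continuous (F m) := by
    simp only [F, jacobiTheta₂_term]
    fun_prop
  have hsum : HasSum (fun m => ∫ t in (0:ℝ)..1, F m t) (fourierCoeffUnit (thetaBasis τ N j) n) :=
    intervalIntegral.hasSum_integral_of_dominated_convergence (fun m _ => bound m)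
      (fun m => (hF_cont m).aestronglyMeasurable)
      (fun m => .of_forall fun t _ => hF_le m t)
      (.of_forall fun _ _ => by
        simpa [bound] using summable_pow_mul_jacobiTheta₂_term_bound |(j * τ).im| hT 0)
      intervalIntegrable_const
      (.of_forall fun t _ =>
        (((summable_jacobiTheta₂_term_iff _ _).mpr hNτ).hasSum.mul_left _).mul_left _)
  have hterm (m : ℤ) :
      ∫ t in (0:ℝ)..1, F m t = if m = 0 then (if n = j then 1 else 0) else 0 := by
    simp only [F, integral_exp_mul_jacobiTheta₂_term, int_sub_add_mul_eq_zero_iff hj hn]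
    split_ifs <;> simp_all
  simp only [hterm] at hsum
  exact hsum.unique (hasSum_ite_eq 0 _)

variable (τ N) in
noncomputable def thetaCoeffs : ThetaSpace τ N 1 1 →ₗ[ℂ] (Fin N → ℂ) where
  toFun φ k := fourierCoeffUnit φ k
  map_add' φ ψ := funext fun k => fourierCoeffUnit_add φ.2.1.continuous ψ.2.1.continuous k
  map_smul' c φ := funext fun k => fourierCoeffUnit_smul c φ k

theorem thetaCoeffs_injective (hN : 0 < N) : Function.Injective (thetaCoeffs τ N) := by
  rw [← LinearMap.ker_eq_bot, LinearMap.ker_eq_bot']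
  intro φ hφ
  exact Subtype.ext <| eq_zero_of_mem_thetaSpace_of_forall_lt φ.2 hN fun j hj =>
    congrFun hφ ⟨j, hj⟩

theorem thetaCoeffs_thetaBasis (hτ : 0 < τ.im) (hN : 0 < N) (j : Fin N) :
    thetaCoeffs τ N ⟨thetaBasis τ N j, thetaBasis_mem_thetaSpace hτ hN j⟩ = Pi.single j 1 := by
  ext k
  simp only [thetaCoeffs, LinearMap.coe_mk, AddHom.coe_mk, Pi.single_apply, Fin.ext_iff]
  exact fourierCoeffUnit_thetaBasis hτ hN j.2 k.2

theorem thetaCoeffs_surjective (hτ : 0 < τ.im) (hN : 0 < N) :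
    Function.Surjective (thetaCoeffs τ N) := fun v =>
  ⟨∑ j, v j • ⟨thetaBasis τ N j, thetaBasis_mem_thetaSpace hτ hN j⟩, by
    simp only [map_sum, map_smul, thetaCoeffs_thetaBasis hτ hN]
    exact (pi_eq_sum_univ' v).symm⟩

theorem finrank_thetaSpace_one_one (hτ : 0 < τ.im) (hN : 0 < N) :
    Module.finrank ℂ (ThetaSpace τ N 1 1) = N := by
  rw [(LinearEquiv.ofBijective _
    ⟨thetaCoeffs_injective hN, thetaCoeffs_surjective hτ hN⟩).finrank_eq, Module.finrank_fin_fun]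

end Normalized

section Twist

variable {τ : ℂ} {N : ℕ} {c1 cτ : ℂ}

noncomputable def twistEquiv (a z : ℂ) : (ℂ → ℂ) ≃ₗ[ℂ] (ℂ → ℂ) where
  toFun φ y := exp (a * y) * φ (y + z)
  invFun ψ y := exp (-(a * (y - z))) * ψ (y - z)
  map_add' φ ψ := by ext y; simp only [Pi.add_apply]; ring
  map_smul' c φ := by ext y; simp only [Pi.smul_apply, smul_eq_mul, RingHom.id_apply]; ring
  left_inv φ := by ext y; simp [← mul_assoc, ← exp_add]
  right_inv ψ := by ext y; simp [← mul_assoc, ← exp_add]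

theorem twistEquiv_apply (a z : ℂ) (φ : ℂ → ℂ) (y : ℂ) :
    twistEquiv a z φ y = exp (a * y) * φ (y + z) :=
  rfl

theorem twistEquiv_symm_apply (a z : ℂ) (ψ : ℂ → ℂ) (y : ℂ) :
    (twistEquiv a z).symm ψ y = exp (-(a * (y - z))) * ψ (y - z) :=
  rfl

theorem exp_mul_comp_add_mem_thetaSpace {φ : ℂ → ℂ} (hφ : φ ∈ ThetaSpace τ N c1 cτ)
    (a b z : ℂ) : (fun y => exp (a * y + b) * φ (y + z)) ∈
      ThetaSpace τ N (exp a * c1) (exp (a * τ - 2 * π * I * N * z) * cτ) := by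
  obtain ⟨hd, h1, hτ⟩ := hφ
  refine ⟨by fun_prop, fun y => ?_, fun y => ?_⟩
  · dsimp only
    rw [add_right_comm, h1, show a * (y + 1) + b = a + (a * y + b) by ring, exp_add]
    ring
  · have e : exp (a * (y + τ) + b) * exp (-2 * π * I * N * (y + z) - π * I * N * τ) =
        exp (a * τ - 2 * π * I * N * z) * exp (-2 * π * I * N * y - π * I * N * τ) *
          exp (a * y + b) := by
      simp only [← exp_add]
      ring_nf
    dsimp only
    rw [add_right_comm, hτ]
    linear_combination cτ * φ (y + z) * e

theorem map_twistEquiv_thetaSpace (a z : ℂ) :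
    (ThetaSpace τ N c1 cτ).map (twistEquiv a z).toLinearMap =
      ThetaSpace τ N (exp a * c1) (exp (a * τ - 2 * π * I * N * z) * cτ) := by
  refine le_antisymm (Submodule.map_le_iff_le_comap.mpr fun φ hφ => ?_) fun ψ hψ => ?_
  · rw [Submodule.mem_comap]
    convert exp_mul_comp_add_mem_thetaSpace hφ a 0 z using 1
    ext y
    rw [LinearEquiv.coe_coe, twistEquiv_apply, add_zero]
  · refine ⟨(twistEquiv a z).symm ψ, ?_, (twistEquiv a z).apply_symm_apply ψ⟩
    have := exp_mul_comp_add_mem_thetaSpace hψ (-a) (a * z) (-z)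
    rw [← mul_assoc, ← mul_assoc, ← exp_add, ← exp_add] at this
    show (twistEquiv a z).symm ψ ∈ ThetaSpace τ N c1 cτ
    convert this using 2
    · rw [neg_add_cancel, exp_zero, one_mul]
    · rw [show -a * τ - 2 * π * I * N * -z + (a * τ - 2 * π * I * N * z) = 0 by ring, exp_zero,
        one_mul]
    · rw [twistEquiv_symm_apply, sub_eq_add_neg]
      ring_nf

theorem finrank_thetaSpace_eq_finrank_thetaSpace_one_one (hN : N ≠ 0) (hc1 : c1 ≠ 0)
    (hcτ : cτ ≠ 0) :
    Module.finrank ℂ (ThetaSpace τ N c1 cτ) = Module.finrank ℂ (ThetaSpace τ N 1 1) := by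
  set a := -log c1
  set z := (a * τ + log cτ) / (2 * π * I * N)
  have ha : exp a * c1 = 1 := by rw [exp_neg, exp_log hc1, inv_mul_cancel₀ hc1]
  have hz : exp (a * τ - 2 * π * I * N * z) * cτ = 1 := by
    have h2z : 2 * π * I * N * z = a * τ + log cτ :=
      mul_div_cancel₀ _ (by simp [Real.pi_ne_zero, hN])
    rw [show a * τ - 2 * π * I * N * z = -log cτ by linear_combination -h2z, exp_neg,
      exp_log hcτ, inv_mul_cancel₀ hcτ]
  rw [← LinearEquiv.finrank_map_eq (twistEquiv a z), map_twistEquiv_thetaSpace, ha, hz]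

end Twist

theorem statement3_general (τ : ℂ) (hτ : 0 < τ.im) (N : ℕ) (hN : 0 < N)
    (χ : latticeGamma τ → ℂˣ) :
    Module.finrank ℂ
      (ThetaSpace τ N ((χ ⟨1, one_mem_latticeGamma τ⟩ : ℂˣ) : ℂ)
        ((χ ⟨τ, tau_mem_latticeGamma τ⟩ : ℂˣ) : ℂ)) = N := by
  rw [finrank_thetaSpace_eq_finrank_thetaSpace_one_one hN.ne' (Units.ne_zero _) (Units.ne_zero _),
    finrank_thetaSpace_one_one hτ hN]

/-- for every positive integer `N` and every character `χ : Γ → ℂˣ`,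
the space `Θ_N(χ)` is an `N`-dimensional complex vector space. -/
theorem statement3 (τ : ℂ) (hτ : 0 < τ.im) (N : ℕ) (hN : 0 < N)
    (χ : latticeGamma τ → ℂˣ) (hχ : ∀ a b : latticeGamma τ, χ (a + b) = χ a * χ b) :
    Module.finrank ℂ
      (ThetaSpace τ N ((χ ⟨1, one_mem_latticeGamma τ⟩ : ℂˣ) : ℂ)
        ((χ ⟨τ, tau_mem_latticeGamma τ⟩ : ℂˣ) : ℂ)) = N :=
  statement3_general τ hτ N hN χ
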